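/- arXiv:1602.02543 — 3 statements merged into one kernel-verified Lean document; each statement's English description precedes it below -/
import Mathlib

section
/- For every partition Z ∈ 𝒫, the closed ball B(Z, α_Z/4) is a homogeneous ball; that is, there is a bijective isometry from B(Z, α_Z/4) ⊆ 𝒫 onto the closed ball of radius α_Z/4 in 𝒳 centered at any representative A of Z. -/
open scoped BigOperators
open MeasureTheory

noncomputable section

/-- Matrices as points of the Euclidean space `ℝ^{ℓ×m}` with the Frobenius norm. -/
abbrev Mat (l m : ℕ) := EuclideanSpace ℝ (Fin l × Fin m)

/-- `A` is a representation matrix: entries in `[0,1]` and each column sums to `1`. -/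
def IsRep {l m : ℕ} (A : Mat l m) : Prop :=
  (∀ p, 0 ≤ A p ∧ A p ≤ 1) ∧ ∀ j : Fin m, ∑ k : Fin l, A (k, j) = 1

/-- The representation space `𝒳`. -/
abbrev RepSpace (l m : ℕ) := {A : Mat l m // IsRep A}

/-- Action of a permutation on a matrix by permuting rows. -/
def permAct {l m : ℕ} (σ : Equiv.Perm (Fin l)) (A : Mat l m) : Mat l m :=
  WithLp.toLp 2 (fun p : Fin l × Fin m => A (σ⁻¹ p.1, p.2))

lemma isRep_permAct {l m : ℕ} (σ : Equiv.Perm (Fin l)) {A : Mat l m} (hA : IsRep A) :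
    IsRep (permAct σ A) := by
  refine ⟨fun p => hA.1 _, fun j => ?_⟩
  have h := Equiv.sum_comp σ⁻¹ (fun k => A (k, j))
  simpa [permAct] using h.trans (hA.2 j)

instance {l m : ℕ} : SMul (Equiv.Perm (Fin l)) (RepSpace l m) :=
  ⟨fun σ A => ⟨permAct σ A.1, isRep_permAct σ A.2⟩⟩

lemma smul_rep_def {l m : ℕ} (σ : Equiv.Perm (Fin l)) (A : RepSpace l m) :
    (σ • A).1 = permAct σ A.1 := rfl

instance {l m : ℕ} : MulAction (Equiv.Perm (Fin l)) (RepSpace l m) where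
  one_smul A := Subtype.ext rfl
  mul_smul σ τ A := Subtype.ext rfl

/-- Two representation matrices are equivalent iff they lie in the same `Π`-orbit. -/
instance pSetoid (l m : ℕ) : Setoid (RepSpace l m) :=
  MulAction.orbitRel (Equiv.Perm (Fin l)) (RepSpace l m)

/-- The partition space `𝒫 = 𝒳/Π`. -/
abbrev PSpace (l m : ℕ) := Quotient (pSetoid l m)

/-- The intrinsic metric `δ` on `𝒫`: the minimal Euclidean distance between representatives. -/
def pdist {l m : ℕ} (X Y : PSpace l m) : ℝ :=
  sInf {d | ∃ A B : RepSpace l m, ⟦A⟧ = X ∧ ⟦B⟧ = Y ∧ d = dist A B}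

/-- The degree of asymmetry `α` of the partition represented by `A`:
`min {‖A - σ·A‖ : σ ≠ id}`. -/
def alpha {l m : ℕ} (A : RepSpace l m) : ℝ :=
  sInf {d | ∃ σ : Equiv.Perm (Fin l), σ ≠ 1 ∧ d = dist A (σ • A)}

/-- The closed ball in the partition space. -/
def pBall {l m : ℕ} (Z : PSpace l m) (r : ℝ) : Set (PSpace l m) :=
  {X | pdist X Z ≤ r}

/-- The metric topology on `𝒫` generated by the open balls of `δ`. -/
instance {l m : ℕ} : TopologicalSpace (PSpace l m) :=
  TopologicalSpace.generateFrom {s | ∃ (Z : PSpace l m) (r : ℝ), s = {X | pdist X Z < r}}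

instance {l m : ℕ} : MeasurableSpace (PSpace l m) := borel _

/-- `B(Z, r)` is a homogeneous ball: there is a bijective isometry onto the closed ball of
radius `r` in `𝒳` centered at a representative of `Z`. -/
def IsHomBall {l m : ℕ} (Z : PSpace l m) (r : ℝ) : Prop :=
  ∃ A : RepSpace l m, ⟦A⟧ = Z ∧
    ∃ φ : pBall Z r → {B : RepSpace l m | dist B A ≤ r},
      Function.Bijective φ ∧
        ∀ X Y : pBall Z r,
          dist (φ X : RepSpace l m) (φ Y : RepSpace l m) =
            pdist (X : PSpace l m) (Y : PSpace l m)

/-- The `k`-th row of a representation matrix, as a point of Euclidean space `ℝ^m`. -/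
def rowOf {l m : ℕ} (A : RepSpace l m) (k : Fin l) : EuclideanSpace ℝ (Fin m) :=
  WithLp.toLp 2 (fun j => A.1 (k, j))

/-- The support of a measure: the smallest closed set of full measure. -/
def msupport {l m : ℕ} (Q : Measure (PSpace l m)) : Set (PSpace l m) :=
  ⋂₀ {S | IsClosed S ∧ Q S = 1}

/-- The Dirichlet fundamental domain centered at `A`. -/
def DirDom {l m : ℕ} (A : RepSpace l m) : Set (RepSpace l m) :=
  {B | ∀ σ : Equiv.Perm (Fin l), dist B A ≤ dist B (σ • A)}

/-!
On the closed ball of radius `α/4` around `A` the quotient map `B ↦ ⟦B⟧` preserves distances: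
for `B`, `C` in that ball and `σ ≠ 1`, the triangle inequality through `A` and `σ • A` gives
`‖B - σ • C‖ ≥ α/2 ≥ ‖B - C‖`, so the minimum defining `δ(⟦B⟧, ⟦C⟧)` is attained at `σ = 1`.
Being distance preserving it is injective, and it maps onto `B(⟦A⟧, α/4)` because `δ` is attained
by a representative. Its inverse is the required isometry.
-/

section

variable {l m : ℕ}

-- `permAct σ` is definitionally the reindexing `piLpCongrLeft` along `σ × id`.
instance : IsIsometricSMul (Equiv.Perm (Fin l)) (RepSpace l m) :=
  ⟨fun σ B C => (LinearIsometryEquiv.piLpCongrLeft 2 ℝ ℝ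
    (σ.prodCongr (Equiv.refl (Fin m)))).isometry B.1 C.1⟩

lemma pdist_mk_eq_iInf (B C : RepSpace l m) :
    pdist (⟦B⟧ : PSpace l m) ⟦C⟧ = ⨅ σ : Equiv.Perm (Fin l), dist B (σ • C) := by
  unfold pdist
  congr 1
  ext d
  constructor
  · rintro ⟨B', C', hB, hC, rfl⟩
    obtain ⟨τ, rfl⟩ := Quotient.exact hB
    obtain ⟨ρ, rfl⟩ := Quotient.exact hC
    refine ⟨τ⁻¹ * ρ, ?_⟩
    show dist B ((τ⁻¹ * ρ) • C) = dist (τ • B) (ρ • C)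
    rw [mul_smul, ← dist_smul τ, smul_inv_smul]
  · rintro ⟨σ, rfl⟩
    exact ⟨B, σ • C, rfl, Quotient.sound ⟨σ, rfl⟩, rfl⟩

lemma pdist_mk_le_dist (B C : RepSpace l m) : pdist (⟦B⟧ : PSpace l m) ⟦C⟧ ≤ dist B C := by
  rw [pdist_mk_eq_iInf]
  exact (ciInf_le (Set.finite_range _).bddBelow 1).trans_eq (by rw [one_smul])

lemma exists_mk_eq_dist_eq_pdist (X : PSpace l m) (C : RepSpace l m) :
    ∃ B : RepSpace l m, ⟦B⟧ = X ∧ dist B C = pdist X ⟦C⟧ := by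
  obtain ⟨B, rfl⟩ := Quotient.exists_rep X
  obtain ⟨σ, hσ⟩ := exists_eq_ciInf_of_finite (f := fun σ : Equiv.Perm (Fin l) => dist B (σ • C))
  refine ⟨σ⁻¹ • B, Quotient.sound ⟨σ⁻¹, rfl⟩, ?_⟩
  rw [pdist_mk_eq_iInf, ← hσ, ← dist_smul σ, smul_inv_smul]

lemma alpha_le_dist_smul (A : RepSpace l m) {σ : Equiv.Perm (Fin l)} (hσ : σ ≠ 1) :
    alpha A ≤ dist A (σ • A) :=
  csInf_le ⟨0, by rintro _ ⟨τ, -, rfl⟩; exact dist_nonneg⟩ ⟨σ, hσ, rfl⟩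

lemma dist_le_dist_smul_of_le_alpha_div_four {A B C : RepSpace l m}
    (hB : dist B A ≤ alpha A / 4) (hC : dist C A ≤ alpha A / 4) (σ : Equiv.Perm (Fin l)) :
    dist B C ≤ dist B (σ • C) := by
  rcases eq_or_ne σ 1 with rfl | hσ
  · rw [one_smul]
  have hBC : dist B C ≤ dist B A + dist C A := dist_triangle_right B C A
  have hα : alpha A ≤ dist B A + dist B (σ • C) + dist C A :=
    calc alpha A ≤ dist A (σ • A) := alpha_le_dist_smul A hσ
      _ ≤ dist A B + dist B (σ • C) + dist (σ • C) (σ • A) := dist_triangle4 _ _ _ _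
      _ = dist B A + dist B (σ • C) + dist C A := by rw [dist_comm A B, dist_smul]
  linarith

lemma pdist_mk_eq_dist_of_le_alpha_div_four {A B C : RepSpace l m}
    (hB : dist B A ≤ alpha A / 4) (hC : dist C A ≤ alpha A / 4) :
    pdist (⟦B⟧ : PSpace l m) ⟦C⟧ = dist B C := by
  refine le_antisymm (pdist_mk_le_dist B C) ?_
  rw [pdist_mk_eq_iInf]
  exact le_ciInf (dist_le_dist_smul_of_le_alpha_div_four hB hC)

lemma mk_mem_pBall {A B : RepSpace l m} {r : ℝ} (hB : dist B A ≤ r) :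
    (⟦B⟧ : PSpace l m) ∈ pBall ⟦A⟧ r :=
  (pdist_mk_le_dist B A).trans hB

end

theorem stmt2_general {l m : ℕ} (A : RepSpace l m) :
    ∃ φ : pBall (⟦A⟧ : PSpace l m) (alpha A / 4) → {B : RepSpace l m | dist B A ≤ alpha A / 4},
      Function.Bijective φ ∧
        ∀ X Y : pBall (⟦A⟧ : PSpace l m) (alpha A / 4),
          dist (φ X : RepSpace l m) (φ Y : RepSpace l m) =
            pdist (X : PSpace l m) (Y : PSpace l m) := by
  let ψ : {B : RepSpace l m | dist B A ≤ alpha A / 4} → pBall (⟦A⟧ : PSpace l m) (alpha A / 4) :=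
    fun B => ⟨⟦B⟧, mk_mem_pBall B.2⟩
  have hψ (B C) : pdist (ψ B : PSpace l m) (ψ C) = dist B C :=
    pdist_mk_eq_dist_of_le_alpha_div_four B.2 C.2
  have injective : Function.Injective ψ := fun B C hBC => by
    have : dist B C = 0 := by rw [← hψ, hBC, hψ, dist_self]
    exact dist_eq_zero.mp this
  have surjective : Function.Surjective ψ := fun X => by
    obtain ⟨B, hBX, hB⟩ := exists_mk_eq_dist_eq_pdist (X : PSpace l m) A
    exact ⟨⟨B, hB.trans_le X.2⟩, Subtype.ext hBX⟩
  let e := Equiv.ofBijective ψ ⟨injective, surjective⟩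
  refine ⟨e.symm, e.symm.bijective, fun X Y => ?_⟩
  have h := hψ (e.symm X) (e.symm Y)
  rw [show ψ (e.symm X) = X from e.apply_symm_apply X,
    show ψ (e.symm Y) = Y from e.apply_symm_apply Y] at h
  exact h.symm

theorem stmt2 {l m : ℕ} (hl : 1 ≤ l) (hm : 1 ≤ m) (A : RepSpace l m) :
    ∃ φ : pBall (⟦A⟧ : PSpace l m) (alpha A / 4) → {B : RepSpace l m | dist B A ≤ alpha A / 4},
      Function.Bijective φ ∧
        ∀ X Y : pBall (⟦A⟧ : PSpace l m) (alpha A / 4),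
          dist (φ X : RepSpace l m) (φ Y : RepSpace l m) =
            pdist (X : PSpace l m) (Y : PSpace l m) :=
  stmt2_general A
end
end

section
/- Suppose ℓ ≥ 2. For any partition Z = [A] with rows a_1,…,a_ℓ of A, the degree of asymmetry satisfies α_Z = min{ √2 · ‖a_p − a_q‖ : 1 ≤ p < q ≤ ℓ }, where ‖·‖ is the Euclidean norm on ℝ^m. -/
open scoped BigOperators
open MeasureTheory

noncomputable section

section RowDistances

variable {l m : ℕ} (A : RepSpace l m)

lemma dist_perm_smul (σ : Equiv.Perm (Fin l)) :
    dist A (σ • A) = √(∑ k, dist (rowOf A k) (rowOf A (σ⁻¹ k)) ^ 2) := by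
  rw [Subtype.dist_eq, smul_rep_def, EuclideanSpace.dist_eq, Fintype.sum_prod_type]
  congr 1
  refine Finset.sum_congr rfl fun k _ => ?_
  rw [EuclideanSpace.dist_eq, Real.sq_sqrt (by positivity)]
  rfl

lemma dist_swap_smul {p q : Fin l} (hpq : p ≠ q) :
    dist A (Equiv.swap p q • A) = √2 * dist (rowOf A p) (rowOf A q) := by
  have hsum : ∑ k, dist (rowOf A k) (rowOf A ((Equiv.swap p q)⁻¹ k)) ^ 2
      = 2 * dist (rowOf A p) (rowOf A q) ^ 2 := by
    rw [Fintype.sum_eq_add p q hpq fun k hk => by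
      simp [Equiv.swap_apply_of_ne_of_ne hk.1 hk.2]]
    simp only [Equiv.swap_inv, Equiv.swap_apply_left, Equiv.swap_apply_right,
      dist_comm (rowOf A q)]
    ring
  rw [dist_perm_smul, hsum, Real.sqrt_mul' _ (sq_nonneg _), Real.sqrt_sq dist_nonneg]

/-- A nontrivial permutation moves some row `p` and also the row `σ⁻¹ p`, so the squared
distance `‖A - σ • A‖²` contains two row terms, each at least `c² / 2`. -/
lemma le_dist_perm_smul {c : ℝ} (hc : 0 ≤ c)
    (hrows : ∀ p q, p ≠ q → c ≤ √2 * dist (rowOf A p) (rowOf A q))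
    {σ : Equiv.Perm (Fin l)} (hσ : σ ≠ 1) : c ≤ dist A (σ • A) := by
  obtain ⟨p, hp⟩ : ∃ p, σ⁻¹ p ≠ p := by
    by_contra! h
    exact hσ (inv_eq_one.mp (Equiv.ext h))
  have hp' : σ⁻¹ (σ⁻¹ p) ≠ σ⁻¹ p := fun h => hp (σ⁻¹.injective h)
  have hterm : ∀ k, σ⁻¹ k ≠ k → c ^ 2 ≤ 2 * dist (rowOf A k) (rowOf A (σ⁻¹ k)) ^ 2 := by
    intro k hk
    have h := pow_le_pow_left₀ hc (hrows k _ hk.symm) 2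
    rwa [mul_pow, Real.sq_sqrt zero_le_two] at h
  have hpair := Finset.add_le_sum (f := fun k => dist (rowOf A k) (rowOf A (σ⁻¹ k)) ^ 2)
    (fun _ _ => sq_nonneg _) (Finset.mem_univ p) (Finset.mem_univ (σ⁻¹ p)) hp.symm
  rw [dist_perm_smul]
  refine (le_abs_self c).trans (Real.abs_le_sqrt ?_)
  linarith [hterm p hp, hterm _ hp']

end RowDistances

theorem stmt9_general {l m : ℕ} (hl : 2 ≤ l) (A : RepSpace l m) :
    alpha A =
      sInf {d | ∃ p q : Fin l, p < q ∧ d = Real.sqrt 2 * dist (rowOf A p) (rowOf A q)} := by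
  set rowGaps := {d | ∃ p q : Fin l, p < q ∧ d = Real.sqrt 2 * dist (rowOf A p) (rowOf A q)}
  have hgaps : rowGaps.Nonempty :=
    ⟨_, ⟨0, by omega⟩, ⟨1, by omega⟩, Fin.mk_lt_mk.mpr one_pos, rfl⟩
  have hgap_le : ∀ p q, p ≠ q → sInf rowGaps ≤ √2 * dist (rowOf A p) (rowOf A q) := by
    intro p q hpq
    refine csInf_le ⟨0, fun d ⟨_, _, _, hd⟩ => hd ▸ by positivity⟩ ?_
    rcases hpq.lt_or_gt with h | h
    · exact ⟨p, q, h, rfl⟩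
    · exact ⟨q, p, h, by rw [dist_comm]⟩
  have hswaps : rowGaps ⊆ {d | ∃ σ : Equiv.Perm (Fin l), σ ≠ 1 ∧ d = dist A (σ • A)} := by
    rintro d ⟨p, q, hpq, rfl⟩
    exact ⟨Equiv.swap p q, fun h => hpq.ne (Equiv.swap_eq_one_iff.mp h),
      (dist_swap_smul A hpq.ne).symm⟩
  refine le_antisymm (csInf_le_csInf ⟨0, fun d ⟨σ, _, hd⟩ => hd ▸ dist_nonneg⟩ hgaps hswaps) ?_
  refine le_csInf (hgaps.mono hswaps) ?_
  rintro d ⟨σ, hσ, rfl⟩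
  exact le_dist_perm_smul A (le_csInf hgaps fun d ⟨_, _, _, hd⟩ => hd ▸ by positivity) hgap_le hσ

theorem stmt9 {l m : ℕ} (hl : 2 ≤ l) (hm : 1 ≤ m) (A : RepSpace l m) :
    alpha A =
      sInf {d | ∃ p q : Fin l, p < q ∧ d = Real.sqrt 2 * dist (rowOf A p) (rowOf A q)} :=
  stmt9_general hl A

end
end

section
/- Suppose ℓ ≥ 2 and let Z = [A] be a hard partition with cluster sizes n_k = |{j : A_{kj} = 1}| for k = 1,…,ℓ. Then α_Z = min{ √(2(n_p + n_q)) : 1 ≤ p < q ≤ ℓ }; equivalently, α_Z = √(2(m_1 + m_2)), where m_1 ≤ m_2 are the sizes of the two smallest clusters of Z. -/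
open scoped BigOperators
open MeasureTheory

noncomputable section

open Finset

/-! Let `r j` be the cluster of column `j` of a hard partition `A`. Then `A - σ • A` has two
entries `±1` in each column `j` with `σ (r j) ≠ r j` and vanishes elsewhere, so
`‖A - σ • A‖² = 2 · #{j | σ (r j) ≠ r j}`, and the columns moved by `σ` are exactly those in the
clusters of the support of `σ`. A nontrivial `σ` moves two distinct clusters `p` and `σ p`, and a
transposition moves exactly two, so the minimum is attained at the transpositions. -/

section Labeling

variable {ι J : Type*} [Fintype ι] [DecidableEq ι] [Fintype J] (r : J → ι)

lemma card_filter_perm_apply_ne (σ : Equiv.Perm ι) :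
    #{j | σ (r j) ≠ r j} = ∑ k ∈ σ.support, #{j | r j = k} := by
  rw [card_eq_sum_card_fiberwise (f := r) fun j hj => Equiv.Perm.mem_support.2 (mem_filter.1 hj).2]
  refine sum_congr rfl fun k hk => congrArg card ?_
  ext j
  simp only [mem_filter, mem_univ, true_and, and_iff_right_iff_imp]
  rintro rfl
  exact Equiv.Perm.mem_support.1 hk

lemma card_filter_swap_apply_ne {p q : ι} (hpq : p ≠ q) :
    #{j | Equiv.swap p q (r j) ≠ r j} = #{j | r j = p} + #{j | r j = q} := by
  rw [card_filter_perm_apply_ne, Equiv.Perm.support_swap hpq, sum_pair hpq]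

lemma card_filter_add_le_card_filter_perm_apply_ne {σ : Equiv.Perm ι} {p q : ι} (hpq : p ≠ q)
    (hp : σ p ≠ p) (hq : σ q ≠ q) :
    #{j | r j = p} + #{j | r j = q} ≤ #{j | σ (r j) ≠ r j} := by
  rw [card_filter_perm_apply_ne, ← sum_pair (f := fun k => #{j | r j = k}) hpq]
  refine sum_le_sum_of_subset fun k hk => Equiv.Perm.mem_support.2 ?_
  rcases mem_insert.1 hk with rfl | hk
  · exact hp
  · rwa [mem_singleton.1 hk]

end Labeling

lemma sum_sq_ite_sub_ite {ι : Type*} [Fintype ι] [DecidableEq ι] (a b : ι) :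
    ∑ k, ((if k = a then (1 : ℝ) else 0) - if k = b then 1 else 0) ^ 2 = if a = b then 0 else 2 := by
  rcases eq_or_ne a b with rfl | hab
  · simp
  · rw [Fintype.sum_eq_add a b hab fun k hk => by simp [hk.1, hk.2]]
    norm_num [hab, hab.symm]

section HardPartition

variable {l m : ℕ}

lemma exists_eq_ite_of_hard (A : RepSpace l m) (hhard : ∀ p, A.1 p = 0 ∨ A.1 p = 1) :
    ∃ r : Fin m → Fin l, ∀ k j, A.1 (k, j) = if k = r j then 1 else 0 := by
  have hcol : ∀ j, ∃ a, ({k | A.1 (k, j) = 1} : Finset (Fin l)) = {a} := by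
    intro j
    refine card_eq_one.1 (Nat.cast_injective (R := ℝ) ?_)
    rw [natCast_card_filter, Nat.cast_one]
    refine (sum_congr rfl fun k _ => ?_).trans (A.2.2 j)
    rcases hhard (k, j) with h | h <;> simp [h]
  choose r hr using hcol
  refine ⟨r, fun k j => ?_⟩
  have hk : A.1 (k, j) = 1 ↔ k = r j := by simpa using congrArg (k ∈ ·) (hr j)
  split_ifs with h
  · exact hk.2 h
  · exact (hhard (k, j)).resolve_right (mt hk.1 h)

variable {A : RepSpace l m} {r : Fin m → Fin l}

lemma card_filter_eq_one_eq (hr : ∀ k j, A.1 (k, j) = if k = r j then 1 else 0) (k : Fin l) :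
    #{j | A.1 (k, j) = 1} = #{j | r j = k} := by
  refine congrArg card (filter_congr fun j _ => ?_)
  rw [hr]
  split_ifs with h <;> simp [h, Ne.symm]

lemma dist_smul_eq_sqrt_card (hr : ∀ k j, A.1 (k, j) = if k = r j then 1 else 0)
    (σ : Equiv.Perm (Fin l)) :
    dist A (σ • A) = √(2 * (#{j | σ (r j) ≠ r j} : ℝ)) := by
  have hσA : ∀ k j, (σ • A).1 (k, j) = if k = σ (r j) then 1 else 0 := by
    intro k j
    simp only [smul_rep_def, permAct, hr, Equiv.Perm.inv_eq_iff_eq]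
  rw [Subtype.dist_eq, EuclideanSpace.dist_eq, Fintype.sum_prod_type_right]
  congr 1
  simp only [Real.dist_eq, sq_abs, hr, hσA, sum_sq_ite_sub_ite, natCast_card_filter, mul_sum]
  refine sum_congr rfl fun j _ => ?_
  by_cases h : σ (r j) = r j <;> simp [h, Ne.symm]

end HardPartition

theorem stmt10_general {l m : ℕ} (A : RepSpace l m)
    (hhard : ∀ p, A.1 p = 0 ∨ A.1 p = 1) :
    alpha A =
      sInf {d | ∃ p q : Fin l, p < q ∧
        d = Real.sqrt (2 * (((Finset.univ.filter fun j : Fin m => A.1 (p, j) = 1).card +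
              (Finset.univ.filter fun j : Fin m => A.1 (q, j) = 1).card : ℕ) : ℝ))} := by
  obtain ⟨r, hr⟩ := exists_eq_ite_of_hard A hhard
  simp only [card_filter_eq_one_eq hr]
  apply csInf_eq_csInf_of_forall_exists_le
  · rintro _ ⟨σ, hσ, rfl⟩
    obtain ⟨p, hp⟩ : ∃ p, σ p ≠ p := not_forall.1 fun h => hσ (Equiv.ext h)
    have hσp : σ (σ p) ≠ σ p := fun h => hp (σ.injective h)
    have hle : ∀ a b, a ≠ b → σ a ≠ a → σ b ≠ b →
        √(2 * ((#{j | r j = a} + #{j | r j = b} : ℕ) : ℝ)) ≤ dist A (σ • A) := by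
      intro a b hab ha hb
      rw [dist_smul_eq_sqrt_card hr]
      gcongr
      exact card_filter_add_le_card_filter_perm_apply_ne r hab ha hb
    rcases lt_or_gt_of_ne hp with h | h
    · exact ⟨_, ⟨σ p, p, h, rfl⟩, hle _ _ h.ne hσp hp⟩
    · exact ⟨_, ⟨p, σ p, h, rfl⟩, hle _ _ h.ne hp hσp⟩
  · rintro _ ⟨p, q, hpq, rfl⟩
    refine ⟨_, ⟨Equiv.swap p q, mt Equiv.swap_eq_one_iff.1 hpq.ne, rfl⟩, ?_⟩
    rw [dist_smul_eq_sqrt_card hr, card_filter_swap_apply_ne r hpq.ne]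

theorem stmt10 {l m : ℕ} (hl : 2 ≤ l) (hm : 1 ≤ m) (A : RepSpace l m)
    (hhard : ∀ p, A.1 p = 0 ∨ A.1 p = 1) :
    alpha A =
      sInf {d | ∃ p q : Fin l, p < q ∧
        d = Real.sqrt (2 * (((Finset.univ.filter fun j : Fin m => A.1 (p, j) = 1).card +
              (Finset.univ.filter fun j : Fin m => A.1 (q, j) = 1).card : ℕ) : ℝ))} :=
  stmt10_general A hhard

end
end
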